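/- Let E, E' be Banach spaces, U a topological space, and φ : U → L(E,E') a continuous family of bounded operators (with the operator-norm topology). If φ(x₀) is a Fredholm operator for some x₀ ∈ U, then there is a neighbourhood V of x₀ such that for all x ∈ V: φ(x) is Fredholm, ind φ(x) = ind φ(x₀), dim ker φ(x) ≤ dim ker φ(x₀), and dim coker φ(x) ≤ dim coker φ(x₀). -/

import Mathlib

/-- A continuous linear operator between Banach spaces is Fredholm if it has closed image
and finite-dimensional kernel and cokernel. -/
def IsFredholmOperator {E E' : Type*} [NormedAddCommGroup E] [NormedSpace ℝ E]
    [NormedAddCommGroup E'] [NormedSpace ℝ E'] (T : E →L[ℝ] E') : Prop :=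
  IsClosed (Set.range T) ∧ FiniteDimensional ℝ (LinearMap.ker (T : E →ₗ[ℝ] E')) ∧
    FiniteDimensional ℝ (E' ⧸ LinearMap.range (T : E →ₗ[ℝ] E'))

/-!
Let `T = φ x₀`, choose a closed complement `M` of `ker T` and a finite-dimensional complement `N`
of `range T`, and border every operator `S` to `M × N → E'`, `(m, n) ↦ S m + n`. The bordered
operator of `T` is invertible, hence so is that of every `S` close to `T`, invertible operators
forming an open set. Invertibility of the bordered operator says that `S` is injective on `M` and
that `E' = S(M) ⊕ N`. Then `S(M)` is closed of finite codimension, so `range S ⊇ S(M)` is closed,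
and `ker S`, `coker S` are the kernel and cokernel of the linear map `ker T → E' ⧸ S(M) ≅ N`
induced by `S`; rank–nullity for this map between finite-dimensional spaces gives
`dim ker S - dim coker S = dim ker T - dim N = ind T`.
-/

open Module Submodule LinearMap Function

namespace LinearMap

section Ring

variable {R E F : Type*} [Ring R] [AddCommGroup E] [Module R E] [AddCommGroup F] [Module R F]

/-- With `E = K ⊕ M` and `F = S(M) ⊕ N`, where `S` maps `M` isomorphically onto `S(M)`, this is
the Schur complement of that block of `S`. -/
def schurComplement (S : E →ₗ[R] F) (K M : Submodule R E) : K →ₗ[R] F ⧸ M.map S :=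
  (M.map S).mkQ ∘ₗ S ∘ₗ K.subtype

variable (S : E →ₗ[R] F) {K M : Submodule R E}

theorem injective_projectionOnto_comp_subtype_ker (hKM : IsCompl K M)
    (hM : Disjoint (ker S) M) : Injective (K.projectionOnto M hKM ∘ₗ (ker S).subtype) := by
  rw [← ker_eq_bot, ker_comp, ker_projectionOnto, ← disjoint_iff_comap_eq_bot]
  exact hM

theorem range_projectionOnto_comp_subtype_ker (hKM : IsCompl K M) :
    range (K.projectionOnto M hKM ∘ₗ (ker S).subtype) = ker (S.schurComplement K M) := by
  ext k
  simp only [mem_range, comp_apply, mem_ker, schurComplement, mkQ_apply, subtype_apply,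
    Quotient.mk_eq_zero, mem_map]
  constructor
  · rintro ⟨⟨x, hx : S x = 0⟩, rfl⟩
    exact ⟨-(x - K.projection M hKM x), M.neg_mem (sub_projection_mem hKM x), by simp [hx]⟩
  · rintro ⟨m, hm, hSm⟩
    refine ⟨⟨(k : E) - m, by simp [mem_ker, hSm]⟩, ?_⟩
    simp [projectionOnto_apply_of_mem_right hKM hm]

noncomputable def kerEquivKerSchurComplement (hKM : IsCompl K M) (hM : Disjoint (ker S) M) :
    ker S ≃ₗ[R] ker (S.schurComplement K M) :=
  (LinearEquiv.ofInjective _ (S.injective_projectionOnto_comp_subtype_ker hKM hM)).trans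
    (LinearEquiv.ofEq _ _ (S.range_projectionOnto_comp_subtype_ker hKM))

theorem map_mkQ_range_eq_range_schurComplement (hKM : Codisjoint K M) :
    (range S).map (M.map S).mkQ = range (S.schurComplement K M) := by
  rw [range_eq_map, ← hKM.eq_top, Submodule.map_sup, Submodule.map_sup, schurComplement,
    range_comp, range_comp, range_subtype, mkQ_map_self, sup_bot_eq]

noncomputable def quotientRangeEquivSchurComplement (hKM : Codisjoint K M) :
    (F ⧸ range S) ≃ₗ[R] (F ⧸ M.map S) ⧸ range (S.schurComplement K M) :=
  (quotientQuotientEquivQuotient _ _ map_le_range).symm.trans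
    (quotEquivOfEq _ _ (S.map_mkQ_range_eq_range_schurComplement hKM))

theorem map_eq_range_of_codisjoint_ker (hM : Codisjoint (ker S) M) : M.map S = range S := by
  rw [range_eq_map, ← hM.eq_top, Submodule.map_sup, le_ker_iff_map.1 le_rfl, bot_sup_eq]

theorem ker_coprod_eq_bot_iff {N : Submodule R F} :
    ker ((S ∘ₗ M.subtype).coprod N.subtype) = ⊥ ↔
      Disjoint (ker S) M ∧ Disjoint (M.map S) N := by
  refine ⟨fun h ↦ ⟨?_, ?_⟩, fun ⟨hM, hN⟩ ↦ ?_⟩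
  · rw [disjoint_def]
    intro x (hx : S x = 0) hxM
    have : ((⟨x, hxM⟩ : M), (0 : N)) ∈ ker ((S ∘ₗ M.subtype).coprod N.subtype) := by simp [hx]
    simpa [h] using this
  · rw [disjoint_def]
    rintro _ ⟨x, hxM, rfl⟩ hxN
    have : ((⟨x, hxM⟩ : M), -(⟨S x, hxN⟩ : N)) ∈ ker ((S ∘ₗ M.subtype).coprod N.subtype) := by
      simp
    exact (by simpa [h] using this : x = 0 ∧ S x = 0).2
  · rw [ker_coprod_of_disjoint_range, ker_comp, disjoint_iff_comap_eq_bot.1 hM.symm, ker_subtype,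
      prod_bot]
    simpa [range_comp] using hN

theorem bijective_coprod_iff {N : Submodule R F} :
    Bijective ((S ∘ₗ M.subtype).coprod N.subtype) ↔ Disjoint (ker S) M ∧ IsCompl (M.map S) N := by
  rw [Bijective, ← ker_eq_bot, ← range_eq_top, range_coprod, range_subtype, range_comp,
    range_subtype, ← codisjoint_iff, ker_coprod_eq_bot_iff, isCompl_iff, and_assoc]

end Ring

section Field

variable {k E F : Type*} [Field k] [AddCommGroup E] [Module k E] [AddCommGroup F] [Module k F]

theorem finrank_ker_add_finrank_eq_finrank_add_finrank_quotient_range [FiniteDimensional k E]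
    [FiniteDimensional k F] (f : E →ₗ[k] F) :
    finrank k (ker f) + finrank k F = finrank k E + finrank k (F ⧸ range f) := by
  have := f.finrank_range_add_finrank_ker
  have := (range f).finrank_quotient_add_finrank
  omega

variable (S : E →ₗ[k] F) {K M : Submodule k E} {N : Submodule k F}

theorem finiteDimensional_ker_of_isCompl [FiniteDimensional k K] (hKM : IsCompl K M)
    (hM : Disjoint (ker S) M) : FiniteDimensional k (ker S) :=
  (S.kerEquivKerSchurComplement hKM hM).symm.finiteDimensional

theorem finrank_ker_le_of_isCompl [FiniteDimensional k K] (hKM : IsCompl K M)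
    (hM : Disjoint (ker S) M) : finrank k (ker S) ≤ finrank k K :=
  finrank_le_finrank_of_injective (S.injective_projectionOnto_comp_subtype_ker hKM hM)

theorem finiteDimensional_quotient_range_of_isCompl [FiniteDimensional k N]
    (hN : IsCompl (M.map S) N) : FiniteDimensional k (F ⧸ range S) :=
  have := (quotientEquivOfIsCompl _ _ hN).symm.finiteDimensional
  (quotientQuotientEquivQuotient (M.map S) _ map_le_range).finiteDimensional

theorem finrank_ker_add_finrank_eq_of_isCompl [FiniteDimensional k K] [FiniteDimensional k N]
    (hKM : IsCompl K M) (hM : Disjoint (ker S) M) (hN : IsCompl (M.map S) N) :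
    finrank k (ker S) + finrank k N = finrank k K + finrank k (F ⧸ range S) := by
  have := (quotientEquivOfIsCompl _ _ hN).symm.finiteDimensional
  rw [(S.kerEquivKerSchurComplement hKM hM).finrank_eq,
    (S.quotientRangeEquivSchurComplement hKM.codisjoint).finrank_eq,
    ← (quotientEquivOfIsCompl _ _ hN).finrank_eq]
  exact finrank_ker_add_finrank_eq_finrank_add_finrank_quotient_range _

end Field

end LinearMap

namespace ContinuousLinearMap

variable {𝕜 E F : Type*} [NontriviallyNormedField 𝕜] [NormedAddCommGroup E] [NormedSpace 𝕜 E]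
  [NormedAddCommGroup F] [NormedSpace 𝕜 F]

def bordered (S : E →L[𝕜] F) (M : Submodule 𝕜 E) (N : Submodule 𝕜 F) : (M × N) →L[𝕜] F :=
  (S ∘L M.subtypeL).coprod N.subtypeL

variable {M : Submodule 𝕜 E} {N : Submodule 𝕜 F}

theorem continuous_bordered : Continuous fun S : E →L[𝕜] F ↦ S.bordered M N :=
  (M.subtypeL.precomp F).continuous.continuousLinearMapCoprod continuous_const

theorem isOpen_setOf_isInvertible_bordered [CompleteSpace M] [CompleteSpace N] :
    IsOpen {S : E →L[𝕜] F | (S.bordered M N).IsInvertible} :=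
  (ContinuousLinearEquiv.isOpen (E := M × N) (F := F)).preimage continuous_bordered

theorem bijective_bordered_iff (S : E →L[𝕜] F) :
    Bijective (S.bordered M N) ↔
      Disjoint (ker (S : E →ₗ[𝕜] F)) M ∧ IsCompl (M.map (S : E →ₗ[𝕜] F)) N :=
  LinearMap.bijective_coprod_iff (S : E →ₗ[𝕜] F)

theorem isClosed_map_of_isInvertible_bordered {S : E →L[𝕜] F}
    (h : (S.bordered M N).IsInvertible) : IsClosed (M.map (S : E →ₗ[𝕜] F) : Set F) := by
  obtain ⟨e, he⟩ := h
  have hinl : (e : (M × N) →ₗ[𝕜] F) ∘ₗ LinearMap.inl 𝕜 M N = (S : E →ₗ[𝕜] F) ∘ₗ M.subtype := by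
    ext m
    change (e : (M × N) →L[𝕜] F) (m, 0) = S m
    simp [he, bordered]
  have hmap : M.map (S : E →ₗ[𝕜] F) = (ker (LinearMap.snd 𝕜 M N)).map (e : (M × N) →ₗ[𝕜] F) := by
    rw [LinearMap.ker_snd, ← range_comp, hinl, range_comp, range_subtype]
  rw [hmap, map_coe]
  exact e.toHomeomorph.isClosedMap _ (isClosed_ker (ContinuousLinearMap.snd 𝕜 M N))

end ContinuousLinearMap

section Fredholm

variable {E F : Type*} [NormedAddCommGroup E] [NormedSpace ℝ E] [NormedAddCommGroup F]
  [NormedSpace ℝ F]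

theorem IsFredholmOperator.of_isInvertible_bordered {S : E →L[ℝ] F} {K M : Submodule ℝ E}
    {N : Submodule ℝ F} [FiniteDimensional ℝ K] [FiniteDimensional ℝ N] (hKM : IsCompl K M)
    (h : (S.bordered M N).IsInvertible) : IsFredholmOperator S := by
  obtain ⟨hM, hN⟩ := S.bijective_bordered_iff.1 h.bijective
  have := (quotientEquivOfIsCompl _ _ hN).symm.finiteDimensional
  refine ⟨?_, S.finiteDimensional_ker_of_isCompl hKM hM,
    S.finiteDimensional_quotient_range_of_isCompl hN⟩
  exact isClosed_mono_of_finiteDimensional_quotient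
    (ContinuousLinearMap.isClosed_map_of_isInvertible_bordered h) map_le_range

theorem IsFredholmOperator.exists_isInvertible_bordered [CompleteSpace E] [CompleteSpace F]
    {T : E →L[ℝ] F} (hT : IsFredholmOperator T) :
    ∃ M : Submodule ℝ E, IsClosed (M : Set E) ∧ IsCompl (ker (T : E →ₗ[ℝ] F)) M ∧
      ∃ N : Submodule ℝ F, FiniteDimensional ℝ N ∧ (T.bordered M N).IsInvertible := by
  obtain ⟨-, hK, hC⟩ := hT
  obtain ⟨M, hMc, hKM⟩ :=
    (ClosedComplemented.of_finiteDimensional (ker (T : E →ₗ[ℝ] F))).exists_isClosed_isCompl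
  obtain ⟨N, hN⟩ := Submodule.exists_isCompl (range (T : E →ₗ[ℝ] F))
  have := (quotientEquivOfIsCompl _ _ hN).finiteDimensional
  have : CompleteSpace M := hMc.completeSpace_coe
  have hbij : Bijective (T.bordered M N) := T.bijective_bordered_iff.2
    ⟨hKM.disjoint, by rwa [map_eq_range_of_codisjoint_ker _ hKM.codisjoint]⟩
  exact ⟨M, hMc, hKM, N, inferInstance,
    ContinuousLinearEquiv.ofBijective _ (ker_eq_bot.2 hbij.1) (range_eq_top.2 hbij.2), rfl⟩

end Fredholm

/-- Local constancy of the Fredholm index and upper semicontinuity of kernel and cokernel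
dimensions for a norm-continuous family `φ : U → L(E,E')` of operators between Banach
spaces: if `φ x₀` is Fredholm, then on some neighbourhood `V` of `x₀` every `φ x` is
Fredholm with the same index and with `dim ker φ x ≤ dim ker φ x₀`,
`dim coker φ x ≤ dim coker φ x₀`. -/
theorem fredholm_local_stability {E E' U : Type*}
    [NormedAddCommGroup E] [NormedSpace ℝ E] [CompleteSpace E]
    [NormedAddCommGroup E'] [NormedSpace ℝ E'] [CompleteSpace E']
    [TopologicalSpace U]
    (φ : U → (E →L[ℝ] E')) (hφ : Continuous φ) (x₀ : U)
    (h : IsFredholmOperator (φ x₀)) :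
    ∃ V ∈ nhds x₀, ∀ x ∈ V, IsFredholmOperator (φ x) ∧
      ((Module.finrank ℝ (LinearMap.ker (φ x : E →ₗ[ℝ] E')) : ℤ)
          - (Module.finrank ℝ (E' ⧸ LinearMap.range (φ x : E →ₗ[ℝ] E')) : ℤ)
        = (Module.finrank ℝ (LinearMap.ker (φ x₀ : E →ₗ[ℝ] E')) : ℤ)
          - (Module.finrank ℝ (E' ⧸ LinearMap.range (φ x₀ : E →ₗ[ℝ] E')) : ℤ)) ∧
      Module.finrank ℝ (LinearMap.ker (φ x : E →ₗ[ℝ] E')) ≤ Module.finrank ℝ (LinearMap.ker (φ x₀ : E →ₗ[ℝ] E')) ∧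
      Module.finrank ℝ (E' ⧸ LinearMap.range (φ x : E →ₗ[ℝ] E'))
        ≤ Module.finrank ℝ (E' ⧸ LinearMap.range (φ x₀ : E →ₗ[ℝ] E')) := by
  obtain ⟨M, hMc, hKM, N, _, hx₀⟩ := h.exists_isInvertible_bordered
  have : FiniteDimensional ℝ (ker (φ x₀ : E →ₗ[ℝ] E')) := h.2.1
  have : CompleteSpace M := hMc.completeSpace_coe
  refine ⟨φ ⁻¹' {S | (S.bordered M N).IsInvertible},
    hφ.continuousAt.preimage_mem_nhds
      (ContinuousLinearMap.isOpen_setOf_isInvertible_bordered.mem_nhds hx₀), fun x hx ↦ ?_⟩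
  obtain ⟨hM, hN⟩ := (φ x).bijective_bordered_iff.1 hx.bijective
  obtain ⟨hM₀, hN₀⟩ := (φ x₀).bijective_bordered_iff.1 hx₀.bijective
  have hind := (φ x : E →ₗ[ℝ] E').finrank_ker_add_finrank_eq_of_isCompl hKM hM hN
  have hind₀ := (φ x₀ : E →ₗ[ℝ] E').finrank_ker_add_finrank_eq_of_isCompl hKM hM₀ hN₀
  have hker := (φ x : E →ₗ[ℝ] E').finrank_ker_le_of_isCompl hKM hM
  exact ⟨.of_isInvertible_bordered hKM hx, by omega, hker, by omega⟩
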